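/- Fix functions f̂_t : ℝⁿ → ℝ for t = 0, 1, 2, …, each twice continuously differentiable with ∇²f̂_t(w) ⪰ m·I for all w, where m > 0, and let 0 < δ < m. Let (w_t) be any sequence in ℝⁿ and let (B_t) be defined recursively by: B₀ symmetric with B₀ − δI positive definite, and for each t, setting v_t := w_{t+1} − w_t and r̃_t := ∇f̂_t(w_{t+1}) − ∇f̂_t(w_t) − δ v_t, B_{t+1} := B_t + (r̃_t r̃_tᵀ)/(v_tᵀ r̃_t) − (B_t v_t v_tᵀ B_t)/(v_tᵀ B_t v_t) + δI whenever v_t ≠ 0, and B_{t+1} := B_t when v_t = 0. Then for every t, the matrix B_t − δI is positive definite and, whenever v_t ≠ 0, the denominators satisfy v_tᵀ r̃_t > 0 and v_tᵀ B_t v_t > 0, so the recursion is well defined. -/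

import Mathlib

/-!
Integrating the Hessian bound along the segment from `w_t` to `w_{t+1}` gives
`⟪v_t, ∇f̂_t(w_{t+1}) - ∇f̂_t(w_t)⟫ ≥ m ‖v_t‖²`, so `δ < m` yields the curvature condition
`v_tᵀ r̃_t ≥ (m - δ) ‖v_t‖² > 0` independently of the matrices. Given the curvature condition,
the BFGS update of a positive definite `B` is positive definite: its quadratic form at `x` is
`B` at the `B`-orthogonal projection of `x` away from `v`, plus `(xᵀr)² / (vᵀr)`, and for
`x ≠ 0` these cannot vanish together. Since `B_{t+1} - δI` is the BFGS update of `B_t` and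
`B_t ≻ B_t - δI ≻ 0`, induction on `t` finishes the proof.
-/

open Matrix
open scoped InnerProductSpace

section Gradient

variable {E : Type*} [NormedAddCommGroup E] [InnerProductSpace ℝ E] [CompleteSpace E]
  {f : E → ℝ} {m : ℝ}

theorem ContDiff.mul_norm_sub_sq_le_inner_gradient_sub (hf : ContDiff ℝ 2 f)
    (hHess : ∀ w u : E, m * ‖u‖ ^ 2 ≤ iteratedFDeriv ℝ 2 f w ![u, u]) (a b : E) :
    m * ‖b - a‖ ^ 2 ≤ ⟪b - a, gradient f b - gradient f a⟫_ℝ := by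
  set v := b - a
  let g : ℝ → ℝ := fun s => fderiv ℝ f (a + s • v) v
  have hg : ∀ s, HasDerivAt g (iteratedFDeriv ℝ 2 f (a + s • v) ![v, v]) s := by
    intro s
    have hline : HasDerivAt (fun s : ℝ => a + s • v) v s := by
      simpa using ((hasDerivAt_id s).smul_const v).const_add a
    have hD : HasFDerivAt (fderiv ℝ f) (fderiv ℝ (fderiv ℝ f) (a + s • v)) (a + s • v) :=
      ((hf.fderiv_right le_rfl).differentiable one_ne_zero _).hasFDerivAt
    have hDline : HasDerivAt (fun s : ℝ => fderiv ℝ f (a + s • v))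
        (fderiv ℝ (fderiv ℝ f) (a + s • v) v) s := hD.comp_hasDerivAt s hline
    rw [iteratedFDeriv_two_apply]
    simpa using hDline.clm_apply (hasDerivAt_const s v)
  have hincr := mul_sub_le_image_sub_of_le_deriv (fun s => (hg s).differentiableAt)
    (fun s => (hg s).deriv ▸ hHess _ v) zero_le_one
  have hend : g 1 - g 0 = ⟪v, gradient f b - gradient f a⟫_ℝ := by
    simp only [g, one_smul, zero_smul, add_zero, v, add_sub_cancel, ← toDual_gradient,
      InnerProductSpace.toDual_apply_apply, inner_sub_right, real_inner_comm v]
  linarith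

theorem ContDiff.inner_gradient_sub_sub_smul_pos (hf : ContDiff ℝ 2 f)
    (hHess : ∀ w u : E, m * ‖u‖ ^ 2 ≤ iteratedFDeriv ℝ 2 f w ![u, u]) {δ : ℝ} (hδm : δ < m)
    {a b : E} (hab : b - a ≠ 0) :
    0 < ⟪b - a, gradient f b - gradient f a - δ • (b - a)⟫_ℝ := by
  have hmono := hf.mul_norm_sub_sq_le_inner_gradient_sub hHess a b
  have hnorm : 0 < ‖b - a‖ := norm_pos_iff.mpr hab
  rw [inner_sub_right, real_inner_smul_right, real_inner_self_eq_norm_sq]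
  nlinarith [mul_pos (sub_pos.mpr hδm) (pow_pos hnorm 2)]

end Gradient

theorem Matrix.PosDef.of_sub_smul_one {ι : Type*} [DecidableEq ι] {M : Matrix ι ι ℝ} {δ : ℝ}
    (h : (M - δ • 1).PosDef) (hδ : 0 ≤ δ) : M.PosDef := by
  simpa using h.add_posSemidef (PosSemidef.one.smul hδ)

section BFGS

variable {ι : Type*} [Fintype ι]

noncomputable def bfgsUpdate (B : Matrix ι ι ℝ) (v r : ι → ℝ) : Matrix ι ι ℝ :=
  B + (v ⬝ᵥ r)⁻¹ • vecMulVec r r - (v ⬝ᵥ B *ᵥ v)⁻¹ • vecMulVec (B *ᵥ v) (B *ᵥ v)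

theorem isHermitian_vecMulVec_self (a : ι → ℝ) : (vecMulVec a a).IsHermitian := by
  simpa using (posSemidef_vecMulVec_self_star a).isHermitian

theorem isHermitian_bfgsUpdate {B : Matrix ι ι ℝ} (hB : B.IsHermitian) (v r : ι → ℝ) :
    (bfgsUpdate B v r).IsHermitian :=
  (hB.add ((isHermitian_vecMulVec_self r).smul (IsSelfAdjoint.all _))).sub
    ((isHermitian_vecMulVec_self _).smul (IsSelfAdjoint.all _))

theorem Matrix.IsHermitian.dotProduct_mulVec_comm {B : Matrix ι ι ℝ} (hB : B.IsHermitian)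
    (x y : ι → ℝ) : x ⬝ᵥ B *ᵥ y = y ⬝ᵥ B *ᵥ x := by
  rw [dotProduct_mulVec, ← mulVec_transpose, ← conjTranspose_eq_transpose_of_trivial, hB.eq,
    dotProduct_comm]

/-- Completing the square in the inner product `B`: the first term is `B` evaluated at the
`B`-orthogonal projection of `x` away from `v`. -/
theorem Matrix.IsHermitian.dotProduct_bfgsUpdate_mulVec {B : Matrix ι ι ℝ} (hB : B.IsHermitian)
    {v : ι → ℝ} (hv : v ⬝ᵥ B *ᵥ v ≠ 0) (r x : ι → ℝ) :
    x ⬝ᵥ bfgsUpdate B v r *ᵥ x =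
      (x - (x ⬝ᵥ B *ᵥ v / v ⬝ᵥ B *ᵥ v) • v) ⬝ᵥ B *ᵥ (x - (x ⬝ᵥ B *ᵥ v / v ⬝ᵥ B *ᵥ v) • v)
        + (x ⬝ᵥ r) ^ 2 / (v ⬝ᵥ r) := by
  have hsymm := hB.dotProduct_mulVec_comm v x
  simp only [bfgsUpdate, add_mulVec, sub_mulVec, smul_mulVec, vecMulVec_mulVec, op_smul_eq_smul,
    mulVec_sub, mulVec_smul, dotProduct_add, dotProduct_sub, dotProduct_smul, sub_dotProduct,
    smul_dotProduct, smul_eq_mul, dotProduct_comm _ x, hsymm]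
  field_simp
  ring

theorem Matrix.PosDef.bfgsUpdate {B : Matrix ι ι ℝ} (hB : B.PosDef) {v r : ι → ℝ} (hv : v ≠ 0)
    (hvr : 0 < v ⬝ᵥ r) : (bfgsUpdate B v r).PosDef := by
  have hq : 0 < v ⬝ᵥ B *ᵥ v := by simpa using hB.dotProduct_mulVec_pos hv
  refine of_dotProduct_mulVec_pos (isHermitian_bfgsUpdate hB.isHermitian v r) fun x hx => ?_
  rw [star_trivial, hB.isHermitian.dotProduct_bfgsUpdate_mulVec hq.ne']
  set c := x ⬝ᵥ B *ᵥ v / v ⬝ᵥ B *ᵥ v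
  by_cases hy : x - c • v = 0
  · have hxv : x = c • v := sub_eq_zero.mp hy
    have hc : c ≠ 0 := fun hc => hx (by rw [hxv, hc, zero_smul])
    have hxr : x ⬝ᵥ r ≠ 0 := by
      rw [hxv, smul_dotProduct, smul_eq_mul]
      exact mul_ne_zero hc hvr.ne'
    rw [hy, zero_dotProduct, zero_add]
    positivity
  · exact add_pos_of_pos_of_nonneg (by simpa using hB.dotProduct_mulVec_pos hy)
      (div_nonneg (sq_nonneg _) hvr.le)

end BFGS

theorem regularized_bfgs_recursion_well_defined_general {n : ℕ}
    (f : ℕ → EuclideanSpace ℝ (Fin n) → ℝ)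
    (hf : ∀ t, ContDiff ℝ 2 (f t))
    (m : ℝ)
    (hHess : ∀ t (w u : EuclideanSpace ℝ (Fin n)),
      m * ‖u‖ ^ 2 ≤ iteratedFDeriv ℝ 2 (f t) w ![u, u])
    (δ : ℝ) (hδ0 : 0 < δ) (hδm : δ < m)
    (w : ℕ → EuclideanSpace ℝ (Fin n))
    (B : ℕ → Matrix (Fin n) (Fin n) ℝ)
    (hB0 : (B 0 - δ • (1 : Matrix (Fin n) (Fin n) ℝ)).PosDef)
    (hrec : ∀ t,
      (w (t + 1) - w t = 0 → B (t + 1) = B t) ∧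
      (w (t + 1) - w t ≠ 0 →
        B (t + 1) =
          B t
          + ((w (t + 1) - w t) ⬝ᵥ
              (gradient (f t) (w (t + 1)) - gradient (f t) (w t)
                - δ • (w (t + 1) - w t)))⁻¹ •
            vecMulVec
              (gradient (f t) (w (t + 1)) - gradient (f t) (w t)
                - δ • (w (t + 1) - w t))
              (gradient (f t) (w (t + 1)) - gradient (f t) (w t)
                - δ • (w (t + 1) - w t))
          - ((w (t + 1) - w t) ⬝ᵥ B t *ᵥ (w (t + 1) - w t))⁻¹ •
            vecMulVec (B t *ᵥ (w (t + 1) - w t)) (B t *ᵥ (w (t + 1) - w t))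
          + δ • (1 : Matrix (Fin n) (Fin n) ℝ))) :
    ∀ t, (B t - δ • (1 : Matrix (Fin n) (Fin n) ℝ)).PosDef ∧
      (w (t + 1) - w t ≠ 0 →
        0 < (w (t + 1) - w t) ⬝ᵥ
            (gradient (f t) (w (t + 1)) - gradient (f t) (w t)
              - δ • (w (t + 1) - w t)) ∧
        0 < (w (t + 1) - w t) ⬝ᵥ B t *ᵥ (w (t + 1) - w t)) := by
  have hcurv (t : ℕ) (hv : w (t + 1) - w t ≠ 0) :
      0 < (w (t + 1) - w t) ⬝ᵥ
        (gradient (f t) (w (t + 1)) - gradient (f t) (w t) - δ • (w (t + 1) - w t)) := by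
    simpa [EuclideanSpace.inner_eq_star_dotProduct, dotProduct_comm] using
      (hf t).inner_gradient_sub_sub_smul_pos (hHess t) hδm hv
  have hpd (t : ℕ) : (B t - δ • (1 : Matrix (Fin n) (Fin n) ℝ)).PosDef := by
    induction t with
    | zero => exact hB0
    | succ t ih =>
      by_cases hv : w (t + 1) - w t = 0
      · rwa [(hrec t).1 hv]
      · rw [(hrec t).2 hv, add_sub_cancel_right]
        exact (ih.of_sub_smul_one hδ0.le).bfgsUpdate (mt (WithLp.ofLp_eq_zero 2).mp hv) (hcurv t hv)
  refine fun t => ⟨hpd t, fun hv => ⟨hcurv t hv, ?_⟩⟩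
  simpa using ((hpd t).of_sub_smul_one hδ0.le).dotProduct_mulVec_pos
    (mt (WithLp.ofLp_eq_zero 2).mp hv)

/-- **Well-posedness of the regularized BFGS recursion (Lemmas 1 and 2 combined).**
If the sampled instantaneous functions `f̂_t` are twice continuously differentiable
with Hessians bounded below by `m·I` and `0 < δ < m`, then along the regularized
BFGS matrix recursion (started from a symmetric `B₀` with `B₀ - δI ≻ 0`) every
`B_t - δI` is positive definite and the denominators `v_tᵀr̃_t` and `v_tᵀB_t v_t`
are strictly positive whenever `v_t ≠ 0`, so the recursion is well defined. -/
theorem regularized_bfgs_recursion_well_defined {n : ℕ}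
    (f : ℕ → EuclideanSpace ℝ (Fin n) → ℝ)
    (hf : ∀ t, ContDiff ℝ 2 (f t))
    (m : ℝ) (hm : 0 < m)
    (hHess : ∀ t (w u : EuclideanSpace ℝ (Fin n)),
      m * ‖u‖ ^ 2 ≤ iteratedFDeriv ℝ 2 (f t) w ![u, u])
    (δ : ℝ) (hδ0 : 0 < δ) (hδm : δ < m)
    (w : ℕ → EuclideanSpace ℝ (Fin n))
    (B : ℕ → Matrix (Fin n) (Fin n) ℝ)
    (hB0symm : (B 0).IsSymm)
    (hB0 : (B 0 - δ • (1 : Matrix (Fin n) (Fin n) ℝ)).PosDef)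
    (hrec : ∀ t,
      (w (t + 1) - w t = 0 → B (t + 1) = B t) ∧
      (w (t + 1) - w t ≠ 0 →
        B (t + 1) =
          B t
          + ((w (t + 1) - w t) ⬝ᵥ
              (gradient (f t) (w (t + 1)) - gradient (f t) (w t)
                - δ • (w (t + 1) - w t)))⁻¹ •
            vecMulVec
              (gradient (f t) (w (t + 1)) - gradient (f t) (w t)
                - δ • (w (t + 1) - w t))
              (gradient (f t) (w (t + 1)) - gradient (f t) (w t)
                - δ • (w (t + 1) - w t))
          - ((w (t + 1) - w t) ⬝ᵥ B t *ᵥ (w (t + 1) - w t))⁻¹ •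
            vecMulVec (B t *ᵥ (w (t + 1) - w t)) (B t *ᵥ (w (t + 1) - w t))
          + δ • (1 : Matrix (Fin n) (Fin n) ℝ))) :
    ∀ t, (B t - δ • (1 : Matrix (Fin n) (Fin n) ℝ)).PosDef ∧
      (w (t + 1) - w t ≠ 0 →
        0 < (w (t + 1) - w t) ⬝ᵥ
            (gradient (f t) (w (t + 1)) - gradient (f t) (w t)
              - δ • (w (t + 1) - w t)) ∧
        0 < (w (t + 1) - w t) ⬝ᵥ B t *ᵥ (w (t + 1) - w t)) :=
  regularized_bfgs_recursion_well_defined_general f hf m hHess δ hδ0 hδm w B hB0 hrec
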